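/- For any integer r ≥ 2, evaluating at y = 1: F_r(x_+,1)·F_r(x_−,1) − r·Σ_{k=0}^{r−1} F_{r,k}(x_+)F_{r,k}(x_−) = 1/((x_+−1)(x_−−1)) − r·(x_+^r x_−^r − 1)/((x_+x_−−1)(x_+^r−1)(x_−^r−1)) as rational functions in x_+ and x_−. -/

import Mathlib

/-! With `G x = ∑_{k<r} x^k = (x^r - 1)/(x - 1)`, one has `∑_k (x^k - 1) = G x - r` and
`∑_k (x^k - 1)(y^k - 1) = G (xy) - G x - G y + r`. In the left-hand side the terms `r · G x`,
`r · G y` and `r²` cancel, leaving `(G x · G y - r · G (xy)) / ((x^r - 1)(y^r - 1))`, which is the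
right-hand side after summing the geometric series. This works in any field as soon as `x`, `y`,
`x^r`, `y^r`, `xy` differ from `1`; in `ℚ(X)(Y)` that is read off from degrees. -/

open Finset

namespace RatFunc

variable {K : Type*} [Field K]

theorem intDegree_X_pow (n : ℕ) : intDegree ((X : RatFunc K) ^ n) = n := by
  rw [← algebraMap_X, ← map_pow, intDegree_polynomial, Polynomial.natDegree_X_pow]

theorem X_pow_ne_one {n : ℕ} (hn : n ≠ 0) : (X : RatFunc K) ^ n ≠ 1 := fun h => by
  simpa [intDegree_X_pow, hn] using congrArg intDegree h

theorem C_X_pow_ne_one {n : ℕ} (hn : n ≠ 0) : (C X : RatFunc (RatFunc K)) ^ n ≠ 1 := by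
  rw [← map_pow]
  exact (map_ne_one_iff C C_injective).mpr (X_pow_ne_one hn)

theorem C_mul_X_ne_one {a : K} (ha : a ≠ 0) : C a * X ≠ 1 := fun h => by
  have := congrArg intDegree h
  rw [intDegree_mul ((map_ne_zero C).mpr ha) X_ne_zero, intDegree_C, intDegree_X,
    intDegree_one] at this
  exact one_ne_zero this

end RatFunc

section

variable {R : Type*} [CommRing R]

theorem sum_range_pow_sub_one (x : R) (r : ℕ) :
    ∑ k ∈ range r, (x ^ k - 1) = ∑ k ∈ range r, x ^ k - r := by
  simp [sum_sub_distrib]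

theorem sum_range_pow_sub_one_mul_pow_sub_one (x y : R) (r : ℕ) :
    ∑ k ∈ range r, (x ^ k - 1) * (y ^ k - 1) =
      ∑ k ∈ range r, (x * y) ^ k - ∑ k ∈ range r, x ^ k - ∑ k ∈ range r, y ^ k + r := by
  simp only [mul_pow, sub_one_mul, mul_sub_one, sum_sub_distrib, sum_const,
    card_range, nsmul_eq_mul, mul_one]
  ring

end

theorem sum_pow_sub_one_div_mul_sum_sub_natCast_mul_sum_mul {K : Type*} [Field K] {x y : K}
    (r : ℕ) (hx : x ≠ 1) (hy : y ≠ 1) (hxr : x ^ r ≠ 1) (hyr : y ^ r ≠ 1) (hxy : x * y ≠ 1) :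
    (∑ k ∈ range r, (x ^ k - 1) / (x ^ r - 1)) *
          (∑ k ∈ range r, (y ^ k - 1) / (y ^ r - 1)) -
        (r : K) * ∑ k ∈ range r, ((x ^ k - 1) / (x ^ r - 1)) * ((y ^ k - 1) / (y ^ r - 1))
      = 1 / ((x - 1) * (y - 1)) -
          r * (x ^ r * y ^ r - 1) / ((x * y - 1) * (x ^ r - 1) * (y ^ r - 1)) := by
  simp only [div_mul_div_comm, ← sum_div, sum_range_pow_sub_one,
    sum_range_pow_sub_one_mul_pow_sub_one]
  rw [geom_sum_eq hx, geom_sum_eq hy, geom_sum_eq hxy, mul_pow]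
  have := sub_ne_zero.mpr hx
  have := sub_ne_zero.mpr hy
  have := sub_ne_zero.mpr hxr
  have := sub_ne_zero.mpr hyr
  have := sub_ne_zero.mpr hxy
  field_simp
  ring

/-- For `r ≥ 2`, evaluating at `y = 1`:
`F_r(x₊,1)·F_r(x₋,1) - r·∑_{k<r} F_{r,k}(x₊)F_{r,k}(x₋)
 = 1/((x₊-1)(x₋-1)) - r·(x₊^r x₋^r - 1)/((x₊x₋-1)(x₊^r-1)(x₋^r-1))`
as rational functions in the independent variables `x₊`, `x₋` (realized in the
iterated rational function field). -/
theorem IF_at_one (r : ℕ) (hr : 2 ≤ r) :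
    let xp : RatFunc (RatFunc ℚ) := RatFunc.C RatFunc.X
    let xm : RatFunc (RatFunc ℚ) := RatFunc.X
    (∑ k ∈ Finset.range r, (xp ^ k - 1) / (xp ^ r - 1)) *
          (∑ k ∈ Finset.range r, (xm ^ k - 1) / (xm ^ r - 1)) -
        (r : RatFunc (RatFunc ℚ)) *
          ∑ k ∈ Finset.range r,
            ((xp ^ k - 1) / (xp ^ r - 1)) * ((xm ^ k - 1) / (xm ^ r - 1))
      = 1 / ((xp - 1) * (xm - 1)) -
          (r : RatFunc (RatFunc ℚ)) * (xp ^ r * xm ^ r - 1) /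
            ((xp * xm - 1) * (xp ^ r - 1) * (xm ^ r - 1)) := by
  have hr0 : r ≠ 0 := by omega
  refine sum_pow_sub_one_div_mul_sum_sub_natCast_mul_sum_mul r ?_ ?_
    (RatFunc.C_X_pow_ne_one hr0) (RatFunc.X_pow_ne_one hr0) ?_
  · simpa using RatFunc.C_X_pow_ne_one (K := ℚ) one_ne_zero
  · simpa using RatFunc.X_pow_ne_one (K := RatFunc ℚ) one_ne_zero
  · exact RatFunc.C_mul_X_ne_one RatFunc.X_ne_zero
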